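/- For any positive definite n×n complex matrix X and any ω ∈ ℝ, the linear operator [X]_ω on M_n(ℂ) defined by [X]_ω(A) = ∫₀¹ e^{ω(s-1/2)} X^s A X^{1-s} ds is strictly positive with respect to the Hilbert–Schmidt inner product; that is, ⟨A, [X]_ω(A)⟩ := Tr(A* [X]_ω(A)) ≥ 0 for all A, with equality if and only if A = 0. -/

import Mathlib

/-!
Write `X = U D U*` with `U` unitary, `D = diag(λ)`, `λᵢ > 0`, and put `C = U* A U`. In this
eigenbasis `[X]_ω` multiplies the entry `Cᵢⱼ` by
`mopWeight ω λᵢ λⱼ = ∫₀¹ e^{ω(s-1/2)} λᵢ^s λⱼ^{1-s} ds`, the integral of a positive continuous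
function. Hence `Tr(A* [X]_ω(A)) = ∑ᵢⱼ mopWeight ω λᵢ λⱼ |Cᵢⱼ|²`, a sum of positive multiples of
the `|Cᵢⱼ|²`, which is nonnegative and vanishes only when `C = 0`, i.e. when `A = 0`.
-/

open Matrix
open scoped ComplexOrder

attribute [local instance] Matrix.frobeniusNormedAddCommGroup Matrix.frobeniusNormedSpace

/-- Real matrix power via continuous functional calculus. -/
noncomputable def mpow {n : ℕ} (A : Matrix (Fin n) (Fin n) ℂ) (s : ℝ) :
    Matrix (Fin n) (Fin n) ℂ :=
  cfc (fun x : ℝ => x ^ s) A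

/-- The noncommutative multiplication operator `[X]_ω(A) = ∫₀¹ e^{ω(s-1/2)} X^s A X^{1-s} ds`. -/
noncomputable def mop {n : ℕ} (X : Matrix (Fin n) (Fin n) ℂ) (ω : ℝ)
    (A : Matrix (Fin n) (Fin n) ℂ) : Matrix (Fin n) (Fin n) ℂ :=
  ∫ s in (0:ℝ)..1, Real.exp (ω * (s - 1/2)) • (mpow X s * A * mpow X (1 - s))

namespace Matrix

variable {ι : Type*} [Fintype ι]

theorem trace_mul_intervalIntegral (B : Matrix ι ι ℂ) {f : ℝ → Matrix ι ι ℂ} (hf : Continuous f)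
    (a b : ℝ) : (B * ∫ s in a..b, f s).trace = ∫ s in a..b, (B * f s).trace :=
  (LinearMap.toContinuousLinearMap
    ((traceLinearMap ι ℝ ℂ).comp (LinearMap.mulLeft ℝ B))).intervalIntegral_comp_comm
    (hf.intervalIntegrable a b) |>.symm

theorem trace_conjTranspose_mul_diagonal_mul_mul_diagonal [DecidableEq ι] (C : Matrix ι ι ℂ)
    (d e : ι → ℝ) :
    (Cᴴ * diagonal (fun i => (d i : ℂ)) * C * diagonal (fun j => (e j : ℂ))).trace =
      ((∑ i, ∑ j, d i * e j * Complex.normSq (C i j) : ℝ) : ℂ) := by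
  simp only [trace, diag, mul_apply, conjTranspose_apply, diagonal_apply, mul_ite, mul_zero,
    Finset.sum_ite_eq', Finset.mem_univ, if_true, Finset.sum_mul]
  rw [Finset.sum_comm]
  push_cast
  refine Finset.sum_congr rfl fun i _ => Finset.sum_congr rfl fun j _ => ?_
  rw [Complex.normSq_eq_conj_mul_self]
  simp only [RCLike.star_def]
  ring

theorem sum_mul_normSq_eq_zero_iff {κ : Type*} [Fintype κ] {w : ι → κ → ℝ}
    (hw : ∀ i j, 0 < w i j) (C : Matrix ι κ ℂ) :
    ∑ i, ∑ j, w i j * Complex.normSq (C i j) = 0 ↔ C = 0 := by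
  have hterm : ∀ i j, 0 ≤ w i j * Complex.normSq (C i j) := fun i j =>
    mul_nonneg (hw i j).le (Complex.normSq_nonneg _)
  simp only [Finset.sum_eq_zero_iff_of_nonneg (fun i _ => Finset.sum_nonneg fun j _ => hterm i j),
    Finset.sum_eq_zero_iff_of_nonneg (fun j _ => hterm _ j), Finset.mem_univ, true_implies,
    mul_eq_zero, (hw _ _).ne', false_or, Complex.normSq_eq_zero, ← Matrix.ext_iff]
  rfl

end Matrix

noncomputable def mopWeight (ω x y : ℝ) : ℝ :=
  ∫ s in (0:ℝ)..1, Real.exp (ω * (s - 1/2)) * (x ^ s * y ^ (1 - s))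

theorem continuous_mopWeight_integrand {x y : ℝ} (hx : 0 < x) (hy : 0 < y) (ω : ℝ) :
    Continuous fun s : ℝ => Real.exp (ω * (s - 1/2)) * (x ^ s * y ^ (1 - s)) := by
  have := continuous_const.rpow continuous_id fun _ => .inl hx.ne'
  have := continuous_const.rpow (continuous_sub_left 1) fun _ => .inl hy.ne'
  fun_prop

theorem mopWeight_pos {x y : ℝ} (hx : 0 < x) (hy : 0 < y) (ω : ℝ) : 0 < mopWeight ω x y :=
  intervalIntegral.intervalIntegral_pos_of_pos_on
    ((continuous_mopWeight_integrand hx hy ω).intervalIntegrable 0 1)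
    (fun s _ => by positivity) zero_lt_one

section mpow

variable {n : ℕ} {X : Matrix (Fin n) (Fin n) ℂ}

theorem Matrix.IsHermitian.mpow_eq (hX : X.IsHermitian) (s : ℝ) :
    mpow X s = (hX.eigenvectorUnitary : Matrix (Fin n) (Fin n) ℂ) *
      diagonal (fun i => ((hX.eigenvalues i ^ s : ℝ) : ℂ)) *
      star (hX.eigenvectorUnitary : Matrix (Fin n) (Fin n) ℂ) := by
  rw [mpow, hX.cfc_eq, IsHermitian.cfc]
  rfl

theorem Matrix.IsHermitian.trace_conjTranspose_mul_mpow_mul_mpow (hX : X.IsHermitian)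
    (A : Matrix (Fin n) (Fin n) ℂ) (s t : ℝ) :
    (Aᴴ * (mpow X s * A * mpow X t)).trace =
      ((∑ i, ∑ j, hX.eigenvalues i ^ s * hX.eigenvalues j ^ t *
        Complex.normSq ((star (hX.eigenvectorUnitary : Matrix (Fin n) (Fin n) ℂ) * A *
          hX.eigenvectorUnitary) i j) : ℝ) : ℂ) := by
  rw [← trace_conjTranspose_mul_diagonal_mul_mul_diagonal, hX.mpow_eq, hX.mpow_eq]
  simp only [← star_eq_conjTranspose, star_mul, star_star, ← mul_assoc]
  rw [Matrix.trace_mul_comm]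
  simp only [mul_assoc]

theorem Matrix.PosDef.continuous_mpow (hX : X.PosDef) : Continuous (mpow X) := by
  simp_rw [funext hX.1.mpow_eq]
  have hpow (i : Fin n) : Continuous fun s : ℝ => hX.1.eigenvalues i ^ s :=
    continuous_const.rpow continuous_id fun _ => .inl (hX.eigenvalues_pos i).ne'
  fun_prop

theorem Matrix.PosDef.trace_conjTranspose_mul_mop (hX : X.PosDef) (ω : ℝ)
    (A : Matrix (Fin n) (Fin n) ℂ) :
    (Aᴴ * mop X ω A).trace =
      ((∑ i, ∑ j, mopWeight ω (hX.1.eigenvalues i) (hX.1.eigenvalues j) *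
        Complex.normSq ((star (hX.1.eigenvectorUnitary : Matrix (Fin n) (Fin n) ℂ) * A *
          hX.1.eigenvectorUnitary) i j) : ℝ) : ℂ) := by
  have hcont : Continuous fun s : ℝ =>
      Real.exp (ω * (s - 1/2)) • (mpow X s * A * mpow X (1 - s)) := by
    have := hX.continuous_mpow
    fun_prop
  have hterm (i j : Fin n) (c : ℝ) : Continuous fun s : ℝ => Real.exp (ω * (s - 1/2)) *
      (hX.1.eigenvalues i ^ s * hX.1.eigenvalues j ^ (1 - s) * c) := by
    simpa only [mul_assoc] using (continuous_mopWeight_integrand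
      (hX.eigenvalues_pos i) (hX.eigenvalues_pos j) ω).mul_const c
  rw [mop, trace_mul_intervalIntegral _ hcont]
  simp_rw [Matrix.mul_smul, trace_smul, hX.1.trace_conjTranspose_mul_mpow_mul_mpow,
    Complex.real_smul, ← Complex.ofReal_mul, intervalIntegral.integral_ofReal, Finset.mul_sum]
  congr 1
  rw [intervalIntegral.integral_finsetSum fun i _ =>
    (continuous_finsetSum _ fun j _ => hterm i j _).intervalIntegrable 0 1]
  refine Finset.sum_congr rfl fun i _ => ?_
  rw [intervalIntegral.integral_finsetSum fun j _ => (hterm i j _).intervalIntegrable 0 1]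
  refine Finset.sum_congr rfl fun j _ => ?_
  rw [mopWeight, ← intervalIntegral.integral_mul_const]
  simp only [mul_assoc]

end mpow

/-- For positive definite `X` and `ω ∈ ℝ`, the operator `[X]_ω` is strictly positive with
respect to the Hilbert–Schmidt inner product `⟨A, B⟩ = Tr(Aᴴ B)`. -/
theorem mop_strictly_positive {n : ℕ}
    (X : Matrix (Fin n) (Fin n) ℂ) (hX : X.PosDef) (ω : ℝ) :
    ∀ A : Matrix (Fin n) (Fin n) ℂ,
      0 ≤ (Aᴴ * mop X ω A).trace ∧ ((Aᴴ * mop X ω A).trace = 0 ↔ A = 0) := by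
  intro A
  have hweight (i j : Fin n) : 0 < mopWeight ω (hX.1.eigenvalues i) (hX.1.eigenvalues j) :=
    mopWeight_pos (hX.eigenvalues_pos i) (hX.eigenvalues_pos j) ω
  rw [hX.trace_conjTranspose_mul_mop, Complex.zero_le_real, Complex.ofReal_eq_zero,
    sum_mul_normSq_eq_zero_iff hweight]
  refine ⟨Finset.sum_nonneg fun i _ => Finset.sum_nonneg fun j _ =>
    mul_nonneg (hweight i j).le (Complex.normSq_nonneg _), ?_⟩
  rw [IsUnit.mul_left_eq_zero Unitary.isUnit_coe,
    IsUnit.mul_right_eq_zero (isUnit_star.mpr Unitary.isUnit_coe)]
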